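/- arXiv:2504.10951 — 2 statements merged into one kernel-verified Lean document; each statement's English description precedes it below -/
import Mathlib

section
/- Let (x^i)_{i=1}^N, (v^i)_{i=1}^{N−1} be a solution of the particle system on (0, t'). Then each v^i is continuously differentiable on (0, t'), and for every t ∈ (0, t') and every i ∈ {1, …, N−1}: if v^{i−1}_t ≤ v^i_t and v^{i+1}_t ≤ v^i_t then (d/dt) v^i_t ≤ 0, and if v^{i−1}_t ≥ v^i_t and v^{i+1}_t ≥ v^i_t then (d/dt) v^i_t ≥ 0 (with the convention v⁰_t = v^N_t = 0). -/
/-!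
Since `v^i = v₀^i Δx₀^i / (x^{i+1} - x^i)`, it is differentiable with
`v̇^i = -v^i (V(v^i, v^{i+1}) - V(v^{i-1}, v^i)) / (x^{i+1} - x^i)`. This is continuous because
`a` is, hence so are `(v_l, v_r) ↦ min` and `max` of `a` over the segment between `v_l` and `v_r`
(parametrize the segment by `[0, 1]`), and the two agree on the diagonal.
At a local maximum of `v`, `V(v^{i-1}, v^i) ≤ a(v^i) ≤ V(v^i, v^{i+1})`, so `v̇^i ≤ 0`; at a local
minimum both inequalities reverse.
-/

open MeasureTheory Set Filter
open scoped ENNReal NNReal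

/-- The velocity field `a(v) = f(v)/v`, extended by `a(0) = f'(0)`. -/
noncomputable def aF (f : ℝ → ℝ) (v : ℝ) : ℝ :=
  if v = 0 then deriv f 0 else f v / v

/-- The particle velocity `V(v_l, v_r)`: the minimum of `a` over `[v_l, v_r]` if
`v_l ≤ v_r`, and the maximum of `a` over `[v_r, v_l]` if `v_r ≤ v_l`. -/
noncomputable def pV (f : ℝ → ℝ) (vl vr : ℝ) : ℝ :=
  if vl ≤ vr then sInf (aF f '' Set.Icc vl vr) else sSup (aF f '' Set.Icc vr vl)

/-- A solution of the particle system `ẋ^i = V(v^{i-1}, v^i)`,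
`v^i_t = v₀^i Δx₀^i / Δx^i_t` on the time interval `[0, t')`, with the conventions
`v⁰ ≡ 0`, `v^N ≡ 0`. -/
structure IsParticleSol (f : ℝ → ℝ) (N : ℕ) (x₀ v₀ : ℕ → ℝ) (t' : ℝ)
    (x v : ℕ → ℝ → ℝ) : Prop where
  init : ∀ i, 1 ≤ i → i ≤ N → x i 0 = x₀ i
  cont : ∀ i, 1 ≤ i → i ≤ N → ContinuousOn (x i) (Set.Ico 0 t')
  order : ∀ t ∈ Set.Ioo (0:ℝ) t', ∀ i, 1 ≤ i → i < N → x i t < x (i+1) t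
  vzero : ∀ t, v 0 t = 0
  vN : ∀ t, v N t = 0
  ode : ∀ i, 1 ≤ i → i ≤ N → ∀ t ∈ Set.Ioo (0:ℝ) t',
    HasDerivAt (x i) (pV f (v (i-1) t) (v i t)) t
  mass : ∀ i, 1 ≤ i → i < N → ∀ t ∈ Set.Ico (0:ℝ) t',
    v i t = v₀ i * (x₀ (i+1) - x₀ i) / (x (i+1) t - x i t)

open scoped Topology

lemma image_uIcc_eq_image_lineMap {α : Type*} (g : ℝ → α) (a b : ℝ) :
    g '' uIcc a b = (fun s => g (AffineMap.lineMap a b s)) '' Icc (0 : ℝ) 1 := by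
  rw [← segment_eq_uIcc, segment_eq_image_lineMap, image_image]

section ExtremaOverSegments

variable {α : Type*} [ConditionallyCompleteLinearOrder α] [TopologicalSpace α] [OrderTopology α]
  {g : ℝ → α}

lemma continuous_sInf_image_uIcc (hg : Continuous g) :
    Continuous fun p : ℝ × ℝ => sInf (g '' uIcc p.1 p.2) := by
  simp_rw [image_uIcc_eq_image_lineMap]
  refine isCompact_Icc.continuous_sInf
    (f := fun (p : ℝ × ℝ) s => g (AffineMap.lineMap p.1 p.2 s)) ?_
  simp only [AffineMap.lineMap_apply_module']
  fun_prop

lemma continuous_sSup_image_uIcc (hg : Continuous g) :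
    Continuous fun p : ℝ × ℝ => sSup (g '' uIcc p.1 p.2) :=
  continuous_sInf_image_uIcc (α := αᵒᵈ) hg

end ExtremaOverSegments

lemma continuous_aF {f : ℝ → ℝ} (hf : Continuous f) (hf0 : f 0 = 0)
    (hfd : DifferentiableAt ℝ f 0) : Continuous (aF f) := by
  rw [continuous_iff_continuousAt]
  intro w
  rcases eq_or_ne w 0 with rfl | hw
  · have hslope : aF f =ᶠ[𝓝[≠] 0] slope f 0 := by
      filter_upwards [self_mem_nhdsWithin] with u (hu : u ≠ 0)
      simp [aF, hu, slope_def_field, hf0]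
    rw [← continuousWithinAt_compl_self, ContinuousWithinAt,
      show aF f 0 = deriv f 0 from if_pos rfl]
    exact (hasDerivAt_iff_tendsto_slope.mp hfd.hasDerivAt).congr' hslope.symm
  · refine (hf.continuousAt.div continuousAt_id hw).congr ?_
    filter_upwards [isOpen_compl_singleton.mem_nhds hw] with u (hu : u ≠ 0)
    simp [aF, hu]

section ParticleVelocity

variable {f : ℝ → ℝ}

lemma pV_eq_uIcc (vl vr : ℝ) :
    pV f vl vr = if vl ≤ vr then sInf (aF f '' uIcc vl vr) else sSup (aF f '' uIcc vl vr) := by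
  unfold pV
  split_ifs with h
  · rw [uIcc_of_le h]
  · rw [uIcc_of_gt (not_le.mp h)]

lemma pV_self (v : ℝ) : pV f v v = aF f v := by
  simp [pV]

lemma continuous_pV (ha : Continuous (aF f)) : Continuous fun p : ℝ × ℝ => pV f p.1 p.2 := by
  simp_rw [pV_eq_uIcc]
  refine (continuous_sInf_image_uIcc ha).if_le (continuous_sSup_image_uIcc ha)
    continuous_fst continuous_snd fun p hp => ?_
  simp [hp]

lemma pV_le_aF_of_mem (ha : Continuous (aF f)) {vl vr v : ℝ} (h : vl ≤ vr) (hv : v ∈ uIcc vl vr) :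
    pV f vl vr ≤ aF f v := by
  rw [pV_eq_uIcc, if_pos h]
  exact csInf_le (isCompact_uIcc.image ha).bddBelow (mem_image_of_mem _ hv)

lemma aF_le_pV_of_mem (ha : Continuous (aF f)) {vl vr v : ℝ} (h : vr ≤ vl) (hv : v ∈ uIcc vl vr) :
    aF f v ≤ pV f vl vr := by
  rcases h.eq_or_lt with rfl | h
  · rw [uIcc_self, mem_singleton_iff] at hv
    rw [hv, pV_self]
  rw [pV_eq_uIcc, if_neg h.not_ge]
  exact le_csSup (isCompact_uIcc.image ha).bddAbove (mem_image_of_mem _ hv)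

lemma pV_le_pV_of_peak (ha : Continuous (aF f)) {l c r : ℝ} (hl : l ≤ c) (hr : r ≤ c) :
    pV f l c ≤ pV f c r :=
  (pV_le_aF_of_mem ha hl right_mem_uIcc).trans (aF_le_pV_of_mem ha hr left_mem_uIcc)

lemma pV_le_pV_of_valley (ha : Continuous (aF f)) {l c r : ℝ} (hl : c ≤ l) (hr : c ≤ r) :
    pV f c r ≤ pV f l c :=
  (pV_le_aF_of_mem ha hr left_mem_uIcc).trans (aF_le_pV_of_mem ha hl right_mem_uIcc)

end ParticleVelocity

namespace IsParticleSol

variable {f : ℝ → ℝ} {N : ℕ} {x₀ v₀ : ℕ → ℝ} {t' : ℝ} {x v : ℕ → ℝ → ℝ}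
  (hsol : IsParticleSol f N x₀ v₀ t' x v)
include hsol

lemma gap_pos {i : ℕ} (hi1 : 1 ≤ i) (hiN : i < N) {t : ℝ} (ht : t ∈ Ioo 0 t') :
    0 < x (i + 1) t - x i t :=
  sub_pos.2 (hsol.order t ht i hi1 hiN)

lemma v_eqOn {i : ℕ} (hi1 : 1 ≤ i) (hiN : i < N) :
    EqOn (v i) (fun t => v₀ i * (x₀ (i + 1) - x₀ i) / (x (i + 1) t - x i t)) (Ioo 0 t') :=
  fun t ht => hsol.mass i hi1 hiN t (Ioo_subset_Ico_self ht)

lemma continuousOn_x {i : ℕ} (hi1 : 1 ≤ i) (hiN : i ≤ N) : ContinuousOn (x i) (Ioo 0 t') :=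
  (hsol.cont i hi1 hiN).mono Ioo_subset_Ico_self

lemma continuousOn_v {j : ℕ} (hjN : j ≤ N) : ContinuousOn (v j) (Ioo 0 t') := by
  rcases Nat.eq_zero_or_pos j with rfl | hj1
  · simpa [funext hsol.vzero] using continuousOn_const
  rcases hjN.eq_or_lt with rfl | hjN
  · simpa [funext hsol.vN] using continuousOn_const
  refine (continuousOn_const.div ((hsol.continuousOn_x (by omega) hjN).sub
    (hsol.continuousOn_x hj1 hjN.le)) fun t ht => (hsol.gap_pos hj1 hjN ht).ne').congr
    (hsol.v_eqOn hj1 hjN)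

lemma v_nonneg {i : ℕ} (hi1 : 1 ≤ i) (hiN : i < N) (hx₀ : x₀ i ≤ x₀ (i + 1)) (hv₀ : 0 ≤ v₀ i)
    {t : ℝ} (ht : t ∈ Ioo 0 t') : 0 ≤ v i t := by
  rw [hsol.v_eqOn hi1 hiN ht]
  have hgap := hsol.gap_pos hi1 hiN ht
  have hgap₀ : 0 ≤ x₀ (i + 1) - x₀ i := sub_nonneg.2 hx₀
  positivity

lemma hasDerivAt_v {i : ℕ} (hi1 : 1 ≤ i) (hiN : i < N) {t : ℝ} (ht : t ∈ Ioo 0 t') :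
    HasDerivAt (v i) (-(v i t * (pV f (v i t) (v (i + 1) t) - pV f (v (i - 1) t) (v i t)) /
      (x (i + 1) t - x i t))) t := by
  have hgap := (hsol.gap_pos hi1 hiN ht).ne'
  have hxi := hsol.ode i hi1 hiN.le t ht
  have hxi' : HasDerivAt (x (i + 1)) (pV f (v i t) (v (i + 1) t)) t := by
    simpa using hsol.ode (i + 1) (by omega) (by omega) t ht
  have hd := (hasDerivAt_const t (v₀ i * (x₀ (i + 1) - x₀ i))).div (hxi'.sub hxi) hgap
  refine (hd.congr_of_eventuallyEq ?_).congr_deriv ?_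
  · filter_upwards [isOpen_Ioo.mem_nhds ht] with s hs using hsol.v_eqOn hi1 hiN hs
  · generalize pV f (v i t) (v (i + 1) t) - pV f (v (i - 1) t) (v i t) = F
    rw [Pi.sub_apply, hsol.v_eqOn hi1 hiN ht]
    field_simp
    ring

lemma continuousOn_deriv_v (ha : Continuous (aF f)) {i : ℕ} (hi1 : 1 ≤ i) (hiN : i < N) :
    ContinuousOn (deriv (v i)) (Ioo 0 t') := by
  have hv : ∀ j, j ≤ N → ContinuousOn (v j) (Ioo 0 t') := fun j hj => hsol.continuousOn_v hj
  have hpV := continuous_pV ha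
  have hflux : ContinuousOn (fun t => pV f (v i t) (v (i + 1) t) - pV f (v (i - 1) t) (v i t))
      (Ioo 0 t') :=
    (hpV.comp_continuousOn ((hv i hiN.le).prodMk (hv (i + 1) hiN))).sub
      (hpV.comp_continuousOn ((hv (i - 1) (by omega)).prodMk (hv i hiN.le)))
  have hgap : ContinuousOn (fun t => x (i + 1) t - x i t) (Ioo 0 t') :=
    (hsol.continuousOn_x (by omega) hiN).sub (hsol.continuousOn_x hi1 hiN.le)
  exact (((hv i hiN.le).mul hflux).div hgap fun t ht => (hsol.gap_pos hi1 hiN ht).ne').neg.congr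
    fun t ht => (hsol.hasDerivAt_v hi1 hiN ht).deriv

end IsParticleSol

theorem local_density_monotonicity_general (f : ℝ → ℝ) (K : ℝ≥0) (hf : LipschitzWith K f)
    (hf0 : f 0 = 0) (hfd : DifferentiableAt ℝ f 0)
    (N : ℕ) (x₀ v₀ : ℕ → ℝ)
    (hx₀ : ∀ i, 1 ≤ i → i < N → x₀ i < x₀ (i+1))
    (hv₀nn : ∀ i, 1 ≤ i → i < N → 0 ≤ v₀ i)
    (t' : ℝ) (x v : ℕ → ℝ → ℝ)
    (hsol : IsParticleSol f N x₀ v₀ t' x v) :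
    ∀ i, 1 ≤ i → i < N →
      (∀ t ∈ Set.Ioo (0:ℝ) t', DifferentiableAt ℝ (v i) t) ∧
      ContinuousOn (deriv (v i)) (Set.Ioo (0:ℝ) t') ∧
      ∀ t ∈ Set.Ioo (0:ℝ) t',
        ((v (i-1) t ≤ v i t ∧ v (i+1) t ≤ v i t) → deriv (v i) t ≤ 0) ∧
        ((v i t ≤ v (i-1) t ∧ v i t ≤ v (i+1) t) → 0 ≤ deriv (v i) t) := by
  intro i hi1 hiN
  have ha : Continuous (aF f) := continuous_aF hf.continuous hf0 hfd
  refine ⟨fun t ht => (hsol.hasDerivAt_v hi1 hiN ht).differentiableAt,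
    hsol.continuousOn_deriv_v ha hi1 hiN, fun t ht => ?_⟩
  have hv := hsol.v_nonneg hi1 hiN (hx₀ i hi1 hiN).le (hv₀nn i hi1 hiN) ht
  have hgap := hsol.gap_pos hi1 hiN ht
  rw [(hsol.hasDerivAt_v hi1 hiN ht).deriv, neg_nonpos, neg_nonneg]
  refine ⟨fun ⟨hl, hr⟩ => ?_, fun ⟨hl, hr⟩ => ?_⟩
  · have hflux := sub_nonneg.2 (pV_le_pV_of_peak ha hl hr)
    exact div_nonneg (mul_nonneg hv hflux) hgap.le
  · have hflux := sub_nonpos.2 (pV_le_pV_of_valley ha hl hr)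
    exact div_nonpos_of_nonpos_of_nonneg (mul_nonpos_of_nonneg_of_nonpos hv hflux) hgap.le

/-- For a solution of the particle system on `(0, t')`, each local density
`v^i` is continuously differentiable on `(0, t')`; its derivative is `≤ 0` at local maxima
(`v^{i−1}_t ≤ v^i_t ≥ v^{i+1}_t`) and `≥ 0` at local minima (`v^{i−1}_t ≥ v^i_t ≤ v^{i+1}_t`). -/
theorem local_density_monotonicity (f : ℝ → ℝ) (K : ℝ≥0) (hf : LipschitzWith K f)
    (hf0 : f 0 = 0) (hfd : DifferentiableAt ℝ f 0)
    (N : ℕ) (hN : 2 ≤ N) (x₀ v₀ : ℕ → ℝ)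
    (hx₀ : ∀ i, 1 ≤ i → i < N → x₀ i < x₀ (i+1))
    (hv₀nn : ∀ i, 1 ≤ i → i < N → 0 ≤ v₀ i)
    (hv₀0 : v₀ 0 = 0) (hv₀N : v₀ N = 0)
    (t' : ℝ) (ht' : 0 < t') (x v : ℕ → ℝ → ℝ)
    (hsol : IsParticleSol f N x₀ v₀ t' x v) :
    ∀ i, 1 ≤ i → i < N →
      (∀ t ∈ Set.Ioo (0:ℝ) t', DifferentiableAt ℝ (v i) t) ∧
      ContinuousOn (deriv (v i)) (Set.Ioo (0:ℝ) t') ∧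
      ∀ t ∈ Set.Ioo (0:ℝ) t',
        ((v (i-1) t ≤ v i t ∧ v (i+1) t ≤ v i t) → deriv (v i) t ≤ 0) ∧
        ((v i t ≤ v (i-1) t ∧ v i t ≤ v (i+1) t) → 0 ≤ deriv (v i) t) :=
  local_density_monotonicity_general f K hf hf0 hfd N x₀ v₀ hx₀ hv₀nn t' x v hsol
end

section
/- (Entropic velocity inequality.) Let (x^i)_{i=1}^N, (v^i)_{i=1}^{N−1} be a solution of the particle system on (0, t'). Then for every t ∈ (0, t'), every k ∈ ℝ and every nonnegative θ ∈ C_c^∞(ℝ): ∫_ℝ θ(x) sgn(v(x, t) − k) ∂_x A(x, t) dx ≥ − ∫_ℝ θ'(x) sgn(v(x, t) − k) (A(x, t) − a(k)) dx, where ∂_x A(·, t) denotes the (almost everywhere defined) spatial derivative of the piecewise linear function A(·, t), and sgn is the sign function with sgn(0) = 0. -/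
open MeasureTheory Set Filter
open scoped ENNReal NNReal

/-! On each cell `(x^i, x^{i+1})` the approximate solution is constant and `A` is affine, so
`θ' sgn(v - k) (A - a(k)) + θ sgn(v - k) ∂ₓA` is the derivative of
`sgn(v^i - k) θ (A - a(k))`.
Integrating cell by cell and summing by parts leaves
`∑ᵢ (sgn(v^{i-1} - k) - sgn(v^i - k)) θ(x^i) (V(v^{i-1}, v^i) - a(k))`, and every term is
nonnegative because `V` is the minimum (maximum) of `a` over the values crossed by an upward
(downward) jump. -/

open Function Topology

section Entropy

variable {f : ℝ → ℝ}

lemma abs_aF_le {K : ℝ≥0} (hf : LipschitzWith K f) (hf0 : f 0 = 0) (u : ℝ) :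
    |aF f u| ≤ max (K : ℝ) |deriv f 0| := by
  unfold aF
  split_ifs with hu
  · exact le_max_right _ _
  · rw [abs_div, div_le_iff₀ (abs_pos.mpr hu)]
    calc |f u| ≤ K * |u| := by simpa [hf0, Real.dist_eq] using hf.dist_le_mul u 0
      _ ≤ _ := by gcongr; exact le_max_left _ _

lemma isBounded_range_aF {K : ℝ≥0} (hf : LipschitzWith K f) (hf0 : f 0 = 0) :
    Bornology.IsBounded (range (aF f)) :=
  isBounded_iff_forall_norm_le.mpr ⟨_, forall_mem_range.mpr (abs_aF_le hf hf0)⟩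

lemma pV_le_aF (hb : BddBelow (range (aF f))) {a b k : ℝ} (hak : a ≤ k) (hkb : k ≤ b) :
    pV f a b ≤ aF f k := by
  rw [pV, if_pos (hak.trans hkb)]
  exact csInf_le (hb.mono (image_subset_range _ _)) (mem_image_of_mem _ ⟨hak, hkb⟩)

lemma aF_le_pV (hb : BddAbove (range (aF f))) {a b k : ℝ} (hbk : b ≤ k) (hka : k ≤ a) :
    aF f k ≤ pV f a b := by
  unfold pV
  split_ifs with hab
  · rw [show a = k by linarith, show b = k by linarith, Icc_self, image_singleton,
      csInf_singleton]
  · exact le_csSup (hb.mono (image_subset_range _ _)) (mem_image_of_mem _ ⟨hbk, hka⟩)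

lemma nonpos_and_nonneg_of_sign_lt_sign {u w : ℝ} (h : Real.sign u < Real.sign w) :
    u ≤ 0 ∧ 0 ≤ w := by
  constructor
  · by_contra! hu
    rw [Real.sign_of_pos hu] at h
    rcases Real.sign_apply_eq w with hw | hw | hw <;> linarith
  · by_contra! hw
    rw [Real.sign_of_neg hw] at h
    rcases Real.sign_apply_eq u with hu | hu | hu <;> linarith

/-- The jump of `sgn(· - k)` is nonzero only if `k` lies between `a` and `b`, and then `pV` being
the minimum or maximum of `aF f` between them fixes the sign of `pV f a b - aF f k`. -/
lemma sign_sub_sign_mul_pV_sub_aF_nonneg (hb : Bornology.IsBounded (range (aF f)))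
    (a b k : ℝ) : 0 ≤ (Real.sign (a - k) - Real.sign (b - k)) * (pV f a b - aF f k) := by
  rcases lt_trichotomy (Real.sign (a - k)) (Real.sign (b - k)) with h | h | h
  · obtain ⟨ha, hb'⟩ := nonpos_and_nonneg_of_sign_lt_sign h
    exact mul_nonneg_of_nonpos_of_nonpos (by linarith)
      (by linarith [pV_le_aF hb.bddBelow (a := a) (b := b) (k := k) (by linarith) (by linarith)])
  · simp [h]
  · obtain ⟨hb', ha⟩ := nonpos_and_nonneg_of_sign_lt_sign h
    exact mul_nonneg (by linarith)
      (by linarith [aF_le_pV hb.bddAbove (a := a) (b := b) (k := k) (by linarith) (by linarith)])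

end Entropy

section PiecewiseIntegration

variable {θ S Af : ℝ → ℝ}

lemma HasCompactSupport.exists_tsupport_subset_Ioo {α : Type*} [Zero α] {g : ℝ → α}
    (hg : HasCompactSupport g) (a b : ℝ) :
    ∃ l r, l < a ∧ b < r ∧ tsupport g ⊆ Ioo l r := by
  obtain ⟨R, hR⟩ := hg.isBounded.subset_closedBall 0
  refine ⟨min a (-R) - 1, max b R + 1, by linarith [min_le_left a (-R)],
    by linarith [le_max_left b R], fun y hy => ?_⟩
  obtain ⟨hRy, hyR⟩ : -R ≤ y ∧ y ≤ R := by simpa [Real.closedBall_eq_Icc] using hR hy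
  constructor <;> linarith [min_le_right a (-R), le_max_right b R]

lemma deriv_eq_of_eqOn_Icc_affine {p q m b y : ℝ} (hA : EqOn Af (fun z => m * z + b) (Icc p q))
    (hy : y ∈ Ioo p q) : deriv Af y = m := by
  have hev : Af =ᶠ[𝓝 y] fun z => m * z + b :=
    Filter.mem_of_superset (Ioo_mem_nhds hy.1 hy.2) fun z hz => hA (Ioo_subset_Icc_self hz)
  rw [hev.deriv_eq]
  simp

lemma integral_deriv_mul_add_integral_mul_deriv_of_affine (hθ : ContDiff ℝ 1 θ)
    {p q s m b c : ℝ} (hpq : p ≤ q) (hS : EqOn S (fun _ => s) (Ioo p q))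
    (hA : EqOn Af (fun y => m * y + b) (Icc p q)) :
    IntervalIntegrable (fun y => deriv θ y * S y * (Af y - c)) volume p q ∧
    IntervalIntegrable (fun y => θ y * S y * deriv Af y) volume p q ∧
    (∫ y in p..q, deriv θ y * S y * (Af y - c)) + (∫ y in p..q, θ y * S y * deriv Af y) =
      s * (θ q * (Af q - c) - θ p * (Af p - c)) := by
  have hθc : Continuous θ := hθ.continuous
  have hθ' : Continuous (deriv θ) := hθ.continuous_deriv le_rfl
  set g₁ : ℝ → ℝ := fun y => deriv θ y * s * (m * y + b - c)
  set g₂ : ℝ → ℝ := fun y => θ y * s * m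
  have hg₁ : IntervalIntegrable g₁ volume p q :=
    (by fun_prop : Continuous g₁).intervalIntegrable _ _
  have hg₂ : IntervalIntegrable g₂ volume p q :=
    (by fun_prop : Continuous g₂).intervalIntegrable _ _
  have h₁ : EqOn g₁ (fun y => deriv θ y * S y * (Af y - c)) (uIoo p q) := by
    rw [uIoo_of_le hpq]
    intro y hy
    simp only [g₁, hS hy, hA (Ioo_subset_Icc_self hy)]
  have h₂ : EqOn g₂ (fun y => θ y * S y * deriv Af y) (uIoo p q) := by
    rw [uIoo_of_le hpq]
    intro y hy
    simp only [g₂, hS hy, deriv_eq_of_eqOn_Icc_affine hA hy]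
  have hderiv : ∀ y ∈ uIcc p q,
      HasDerivAt (fun y => s * (θ y * (m * y + b - c))) (g₁ y + g₂ y) y := by
    intro y _
    have hlin : HasDerivAt (fun z => m * z + b - c) m y := by
      simpa using (((hasDerivAt_id y).const_mul m).add_const b).sub_const c
    exact (((hθ.differentiable one_ne_zero y).hasDerivAt.mul hlin).const_mul s).congr_deriv
      (by simp only [g₁, g₂]; ring)
  refine ⟨hg₁.congr_uIoo h₁, hg₂.congr_uIoo h₂, ?_⟩
  rw [← intervalIntegral.integral_congr_uIoo h₁, ← intervalIntegral.integral_congr_uIoo h₂,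
    ← intervalIntegral.integral_add hg₁ hg₂,
    intervalIntegral.integral_eq_sub_of_hasDerivAt hderiv (hg₁.add hg₂)]
  simp only [hA (left_mem_Icc.2 hpq), hA (right_mem_Icc.2 hpq)]
  ring

lemma integral_eq_sum_intervalIntegral {F : ℝ → ℝ} {p : ℕ → ℝ} {n : ℕ}
    (hint : ∀ i < n, IntervalIntegrable F volume (p i) (p (i + 1)))
    (hF : support F ⊆ Ioc (p 0) (p n)) :
    ∫ y, F y = ∑ i ∈ Finset.range n, ∫ y in p i..p (i + 1), F y := by
  rw [intervalIntegral.sum_integral_adjacent_intervals hint,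
    intervalIntegral.integral_eq_integral_of_support_subset hF]

lemma sum_range_succ_mul_sub_by_parts {R : Type*} [CommRing R] (σ Φ : ℕ → R) (n : ℕ) :
    ∑ i ∈ Finset.range (n + 1), σ i * (Φ (i + 1) - Φ i) =
      σ n * Φ (n + 1) - σ 0 * Φ 0 +
        ∑ i ∈ Finset.range n, (σ i - σ (i + 1)) * Φ (i + 1) := by
  induction n with
  | zero => simp [mul_sub]
  | succ n ih =>
    rw [Finset.sum_range_succ, ih, Finset.sum_range_succ]
    ring

theorem integral_deriv_mul_add_integral_mul_deriv_eq_sum_jumps {n : ℕ} {p : ℕ → ℝ}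
    (hp : ∀ i ≤ n, p i < p (i + 1)) (hθ : ContDiff ℝ 1 θ)
    (hθp : tsupport θ ⊆ Ioo (p 0) (p (n + 1))) {σ : ℕ → ℝ}
    (hS : ∀ i ≤ n, EqOn S (fun _ => σ i) (Ioo (p i) (p (i + 1))))
    (hA : ∀ i ≤ n, ∃ m b, EqOn Af (fun y => m * y + b) (Icc (p i) (p (i + 1)))) (c : ℝ) :
    (∫ y, deriv θ y * S y * (Af y - c)) + (∫ y, θ y * S y * deriv Af y) =
      ∑ i ∈ Finset.range n, (σ i - σ (i + 1)) * (θ (p (i + 1)) * (Af (p (i + 1)) - c)) := by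
  have hcell : ∀ i < n + 1,
      IntervalIntegrable (fun y => deriv θ y * S y * (Af y - c)) volume (p i) (p (i + 1)) ∧
      IntervalIntegrable (fun y => θ y * S y * deriv Af y) volume (p i) (p (i + 1)) ∧
      (∫ y in p i..p (i + 1), deriv θ y * S y * (Af y - c)) +
        (∫ y in p i..p (i + 1), θ y * S y * deriv Af y) =
        σ i * (θ (p (i + 1)) * (Af (p (i + 1)) - c) - θ (p i) * (Af (p i) - c)) := fun i hi => by
    obtain ⟨m, b, hmb⟩ := hA i (Nat.lt_succ_iff.mp hi)
    exact integral_deriv_mul_add_integral_mul_deriv_of_affine hθ (c := c)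
      (hp i (Nat.lt_succ_iff.mp hi)).le (hS i (Nat.lt_succ_iff.mp hi)) hmb
  have hvanish : ∀ y ∉ Ioo (p 0) (p (n + 1)), θ y = 0 ∧ deriv θ y = 0 := fun y hy =>
    ⟨image_eq_zero_of_notMem_tsupport fun h => hy (hθp h),
      notMem_support.mp fun h => hy (hθp (support_deriv_subset h))⟩
  have hsupp : ∀ F : ℝ → ℝ, (∀ y, θ y = 0 → deriv θ y = 0 → F y = 0) →
      support F ⊆ Ioc (p 0) (p (n + 1)) := fun F hF =>
    support_subset_iff'.mpr fun y hy => by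
      obtain ⟨h₀, h₁⟩ := hvanish y fun h => hy (Ioo_subset_Ioc_self h)
      exact hF y h₀ h₁
  rw [integral_eq_sum_intervalIntegral (fun i hi => (hcell i hi).1)
      (hsupp _ fun y _ h => by simp [h]),
    integral_eq_sum_intervalIntegral (fun i hi => (hcell i hi).2.1)
      (hsupp _ fun y h _ => by simp [h]),
    ← Finset.sum_add_distrib,
    Finset.sum_congr rfl fun i hi => (hcell i (Finset.mem_range.mp hi)).2.2,
    sum_range_succ_mul_sub_by_parts σ (fun i => θ (p i) * (Af (p i) - c)),
    (hvanish (p 0) fun h => h.1.false).1, (hvanish (p (n + 1)) fun h => h.2.false).1]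
  simp

end PiecewiseIntegration

section Cells

variable {l r : ℝ} {N : ℕ} {x : ℕ → ℝ}

/-- The nodes `x 1 < ⋯ < x N` with `l` at index `0` and `r` at index `N + 1` standing in for
`x⁰ = -∞` and `x^{N+1} = +∞`. -/
def withEndpoints (l r : ℝ) (N : ℕ) (x : ℕ → ℝ) (i : ℕ) : ℝ :=
  if i = 0 then l else if i = N + 1 then r else x i

lemma withEndpoints_zero : withEndpoints l r N x 0 = l := by simp [withEndpoints]

lemma withEndpoints_succ_self : withEndpoints l r N x (N + 1) = r := by simp [withEndpoints]

lemma withEndpoints_of_le {i : ℕ} (h1 : 1 ≤ i) (hN : i ≤ N) :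
    withEndpoints l r N x i = x i := by
  rw [withEndpoints, if_neg (by omega), if_neg (by omega)]

lemma withEndpoints_cell_cases (l r : ℝ) (x : ℕ → ℝ) (hN : 1 ≤ N) {i : ℕ}
    (hi : i ≤ N) :
    (i = 0 ∧ withEndpoints l r N x i = l ∧ withEndpoints l r N x (i + 1) = x 1) ∨
    (i = N ∧ withEndpoints l r N x i = x N ∧ withEndpoints l r N x (i + 1) = r) ∨
    (1 ≤ i ∧ i < N ∧ withEndpoints l r N x i = x i ∧
      withEndpoints l r N x (i + 1) = x (i + 1)) := by
  obtain rfl | hi0 := Nat.eq_zero_or_pos i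
  · exact .inl ⟨rfl, withEndpoints_zero, withEndpoints_of_le le_rfl hN⟩
  obtain rfl | hiN := eq_or_lt_of_le hi
  · exact .inr (.inl ⟨rfl, withEndpoints_of_le hi0 le_rfl, withEndpoints_succ_self⟩)
  · exact .inr (.inr
      ⟨hi0, hiN, withEndpoints_of_le hi0 hi, withEndpoints_of_le (by omega) hiN⟩)

lemma withEndpoints_lt_succ (hN : 1 ≤ N) (hx : ∀ i, 1 ≤ i → i < N → x i < x (i + 1))
    (hl : l < x 1) (hr : x N < r) {i : ℕ} (hi : i ≤ N) :
    withEndpoints l r N x i < withEndpoints l r N x (i + 1) := by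
  rcases withEndpoints_cell_cases l r x hN hi with
      ⟨-, h₀, h₁⟩ | ⟨-, h₀, h₁⟩ | ⟨h1i, hiN, h₀, h₁⟩ <;>
    rw [h₀, h₁]
  exacts [hl, hr, hx i h1i hiN]

lemma eqOn_withEndpoints_Ioo {w : ℝ → ℝ} {v : ℕ → ℝ} (hN : 1 ≤ N)
    (hwl : ∀ y, y < x 1 → w y = v 0) (hwr : ∀ y, x N < y → w y = v N)
    (hwmid : ∀ i, 1 ≤ i → i < N → ∀ y ∈ Ioo (x i) (x (i + 1)), w y = v i)
    {i : ℕ} (hi : i ≤ N) :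
    EqOn w (fun _ => v i) (Ioo (withEndpoints l r N x i) (withEndpoints l r N x (i + 1))) := by
  rcases withEndpoints_cell_cases l r x hN hi with
      ⟨rfl, h₀, h₁⟩ | ⟨rfl, h₀, h₁⟩ | ⟨h1i, hiN, h₀, h₁⟩ <;>
    rw [h₀, h₁]
  exacts [fun y hy => hwl y hy.2, fun y hy => hwr y hy.1, hwmid i h1i hiN]

lemma exists_affine_eqOn_withEndpoints_Icc {A : ℝ → ℝ} {V : ℕ → ℝ} {cl cr : ℝ}
    (hN : 1 ≤ N) (hx : ∀ i, 1 ≤ i → i < N → x i < x (i + 1))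
    (hAl : ∀ y, y ≤ x 1 → A y = cl) (hAr : ∀ y, x N ≤ y → A y = cr)
    (hAmid : ∀ i, 1 ≤ i → i < N → ∀ y ∈ Icc (x i) (x (i + 1)),
      A y = ((x (i + 1) - y) * V i + (y - x i) * V (i + 1)) / (x (i + 1) - x i))
    {i : ℕ} (hi : i ≤ N) :
    ∃ m b, EqOn A (fun y => m * y + b)
      (Icc (withEndpoints l r N x i) (withEndpoints l r N x (i + 1))) := by
  rcases withEndpoints_cell_cases l r x hN hi with
      ⟨-, h₀, h₁⟩ | ⟨-, h₀, h₁⟩ | ⟨h1i, hiN, h₀, h₁⟩ <;>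
    rw [h₀, h₁]
  · exact ⟨0, cl, fun y hy => by simp [hAl y hy.2]⟩
  · exact ⟨0, cr, fun y hy => by simp [hAr y hy.1]⟩
  · have hΔ : x (i + 1) - x i ≠ 0 := sub_ne_zero.mpr (hx i h1i hiN).ne'
    refine ⟨(V (i + 1) - V i) / (x (i + 1) - x i),
      (x (i + 1) * V i - x i * V (i + 1)) / (x (i + 1) - x i), fun y hy => ?_⟩
    rw [hAmid i h1i hiN y hy]
    field_simp
    ring

lemma apply_node_eq_of_interpolates {A : ℝ → ℝ} {V : ℕ → ℝ}
    (hx : ∀ i, 1 ≤ i → i < N → x i < x (i + 1)) (hAr : ∀ y, x N ≤ y → A y = V N)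
    (hAmid : ∀ i, 1 ≤ i → i < N → ∀ y ∈ Icc (x i) (x (i + 1)),
      A y = ((x (i + 1) - y) * V i + (y - x i) * V (i + 1)) / (x (i + 1) - x i))
    {j : ℕ} (h1 : 1 ≤ j) (hj : j ≤ N) : A (x j) = V j := by
  obtain rfl | hjN := eq_or_lt_of_le hj
  · exact hAr _ le_rfl
  · have hΔ : x (j + 1) - x j ≠ 0 := sub_ne_zero.mpr (hx j h1 hjN).ne'
    rw [hAmid j h1 hjN (x j) ⟨le_rfl, (hx j h1 hjN).le⟩, sub_self, zero_mul, add_zero,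
      mul_div_cancel_left₀ _ hΔ]

end Cells

theorem entropic_velocity_inequality_general
    (f : ℝ → ℝ) (K : ℝ≥0) (hf : LipschitzWith K f)
    (hf0 : f 0 = 0)
    (N : ℕ) (hN : 2 ≤ N) (x₀ v₀ : ℕ → ℝ)
    (t' : ℝ) (x v : ℕ → ℝ → ℝ)
    (hsol : IsParticleSol f N x₀ v₀ t' x v)
    (w : ℝ → ℝ → ℝ)
    (hwl : ∀ t ∈ Set.Ico (0:ℝ) t', ∀ y, y < x 1 t → w y t = 0)
    (hwr : ∀ t ∈ Set.Ico (0:ℝ) t', ∀ y, x N t < y → w y t = 0)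
    (hwmid : ∀ t ∈ Set.Ico (0:ℝ) t', ∀ i, 1 ≤ i → i < N →
      ∀ y ∈ Set.Ioo (x i t) (x (i+1) t), w y t = v i t)
    (A : ℝ → ℝ → ℝ)
    (hAl : ∀ t ∈ Set.Ico (0:ℝ) t', ∀ y, y ≤ x 1 t → A y t = pV f 0 (v 1 t))
    (hAr : ∀ t ∈ Set.Ico (0:ℝ) t', ∀ y, x N t ≤ y → A y t = pV f (v (N-1) t) 0)
    (hAmid : ∀ t ∈ Set.Ico (0:ℝ) t', ∀ i, 1 ≤ i → i < N →
      ∀ y ∈ Set.Icc (x i t) (x (i+1) t),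
        A y t = ((x (i+1) t - y) * pV f (v (i-1) t) (v i t)
          + (y - x i t) * pV f (v i t) (v (i+1) t)) / (x (i+1) t - x i t))
    :
    ∀ t ∈ Set.Ioo (0:ℝ) t', ∀ k : ℝ, ∀ θ : ℝ → ℝ,
      ContDiff ℝ (⊤ : ℕ∞) θ → HasCompactSupport θ → (∀ y, 0 ≤ θ y) →
      -(∫ y, deriv θ y * Real.sign (w y t - k) * (A y t - aF f k)) ≤
        ∫ y, θ y * Real.sign (w y t - k) * deriv (fun z => A z t) y := by
  intro t ht k θ hθ hθc hθnn
  have htI : t ∈ Ico 0 t' := Ioo_subset_Ico_self ht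
  have hN1 : 1 ≤ N := by omega
  have hx : ∀ i, 1 ≤ i → i < N → x i t < x (i + 1) t := hsol.order t ht
  obtain ⟨l, r, hl, hr, hθlr⟩ := hθc.exists_tsupport_subset_Ioo (x 1 t) (x N t)
  have hsum := integral_deriv_mul_add_integral_mul_deriv_eq_sum_jumps
    (p := withEndpoints l r N (x · t)) (S := fun y => Real.sign (w y t - k))
    (Af := fun z => A z t) (σ := fun i => Real.sign (v i t - k))
    (fun i hi => withEndpoints_lt_succ hN1 hx hl hr hi) (hθ.of_le (by exact_mod_cast le_top))
    (by rwa [withEndpoints_zero, withEndpoints_succ_self])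
    (fun i hi => (eqOn_withEndpoints_Ioo hN1
      (fun y hy => (hwl t htI y hy).trans (hsol.vzero t).symm)
      (fun y hy => (hwr t htI y hy).trans (hsol.vN t).symm) (hwmid t htI) hi).comp_left
      (g := fun u => Real.sign (u - k)))
    (fun i hi => exists_affine_eqOn_withEndpoints_Icc hN1 hx (hAl t htI) (hAr t htI)
      (V := fun j => pV f (v (j - 1) t) (v j t)) (hAmid t htI) hi) (aF f k)
  rw [neg_le_iff_add_nonneg', hsum]
  refine Finset.sum_nonneg fun i hi => ?_
  have hiN := Finset.mem_range.mp hi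
  rw [withEndpoints_of_le (by omega) hiN, apply_node_eq_of_interpolates hx
    (fun y hy => (hAr t htI y hy).trans (by rw [hsol.vN])) (hAmid t htI) (by omega) hiN]
  simpa [mul_left_comm] using mul_nonneg (hθnn _)
    (sign_sub_sign_mul_pV_sub_aF_nonneg (isBounded_range_aF hf hf0) (v i t) (v (i + 1) t) k)

/-- **Entropic velocity inequality.** For every `t ∈ (0, tʹ)`, `k ∈ ℝ` and
nonnegative `θ ∈ C_c^∞(ℝ)`:
`∫ θ sgn(v − k) ∂ₓA dx ≥ −∫ θʹ sgn(v − k) (A − a(k)) dx`. -/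
theorem entropic_velocity_inequality
    (f : ℝ → ℝ) (K : ℝ≥0) (hf : LipschitzWith K f)
    (hf0 : f 0 = 0) (hfd : DifferentiableAt ℝ f 0)
    (N : ℕ) (hN : 2 ≤ N) (x₀ v₀ : ℕ → ℝ)
    (hx₀ : ∀ i, 1 ≤ i → i < N → x₀ i < x₀ (i+1))
    (hv₀nn : ∀ i, 1 ≤ i → i < N → 0 ≤ v₀ i)
    (hv₀0 : v₀ 0 = 0) (hv₀N : v₀ N = 0)
    (t' : ℝ) (ht' : 0 < t') (x v : ℕ → ℝ → ℝ)
    (hsol : IsParticleSol f N x₀ v₀ t' x v)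
    (w : ℝ → ℝ → ℝ)
    (hwl : ∀ t ∈ Set.Ico (0:ℝ) t', ∀ y, y < x 1 t → w y t = 0)
    (hwr : ∀ t ∈ Set.Ico (0:ℝ) t', ∀ y, x N t < y → w y t = 0)
    (hwmid : ∀ t ∈ Set.Ico (0:ℝ) t', ∀ i, 1 ≤ i → i < N →
      ∀ y ∈ Set.Ioo (x i t) (x (i+1) t), w y t = v i t)
    (A : ℝ → ℝ → ℝ)
    (hAl : ∀ t ∈ Set.Ico (0:ℝ) t', ∀ y, y ≤ x 1 t → A y t = pV f 0 (v 1 t))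
    (hAr : ∀ t ∈ Set.Ico (0:ℝ) t', ∀ y, x N t ≤ y → A y t = pV f (v (N-1) t) 0)
    (hAmid : ∀ t ∈ Set.Ico (0:ℝ) t', ∀ i, 1 ≤ i → i < N →
      ∀ y ∈ Set.Icc (x i t) (x (i+1) t),
        A y t = ((x (i+1) t - y) * pV f (v (i-1) t) (v i t)
          + (y - x i t) * pV f (v i t) (v (i+1) t)) / (x (i+1) t - x i t))
    :
    ∀ t ∈ Set.Ioo (0:ℝ) t', ∀ k : ℝ, ∀ θ : ℝ → ℝ,
      ContDiff ℝ (⊤ : ℕ∞) θ → HasCompactSupport θ → (∀ y, 0 ≤ θ y) →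
      -(∫ y, deriv θ y * Real.sign (w y t - k) * (A y t - aF f k)) ≤
        ∫ y, θ y * Real.sign (w y t - k) * deriv (fun z => A z t) y :=
  entropic_velocity_inequality_general f K hf hf0 N hN x₀ v₀ t' x v hsol w hwl hwr hwmid A hAl hAr
    hAmid
end
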